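/- Fix τ ∈ ℍ, z ∈ ℂ, and a ∈ ℂ, with z ∉ ℤ+τℤ, 2z ∉ ℤ+τℤ, and (a+1)z ∉ ℤ+τℤ. Let F₂(t) = [θ(t+z)θ'(0)/(θ(t)θ(z))]² · [θ(t−z)θ'(0)/(θ(t)θ(−z))] · [θ(−t+2z)θ(z)/(θ(−t+z)θ(2z))] · [θ(t+(a+1)z)θ(z)/(θ(t+z)θ((a+1)z))] · [θ(t−(a+1)z)θ(z)/(θ(t−z)θ((a+1)z))]. Then F₂ has a simple pole at t = z with residue lim_{t→z} (t−z)·F₂(t) = −θ((a+2)z)θ(az)/θ((a+1)z)² · (θ'(0)/θ(z))². -/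

import Mathlib

open Complex Topology Filter

/-- `q = e^{2πiτ}`. -/
noncomputable def jq (τ : ℂ) : ℂ := Complex.exp (2 * Real.pi * I * τ)

/-- The Jacobi theta function
`θ(t,τ) = q^{1/8} · 2 sin(πt) · ∏_{n≥1}(1−qⁿ) · ∏_{n≥1}(1−qⁿe^{2πit})(1−qⁿe^{−2πit})`,
where `q^{1/8} = e^{πiτ/4}`. -/
noncomputable def jTheta (t τ : ℂ) : ℂ :=
  Complex.exp (Real.pi * I * τ / 4) * (2 * Complex.sin (Real.pi * t)) *
    (∏' n : ℕ, (1 - jq τ ^ (n + 1))) *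
    (∏' n : ℕ, (1 - jq τ ^ (n + 1) * Complex.exp (2 * Real.pi * I * t)) *
      (1 - jq τ ^ (n + 1) * Complex.exp (-(2 * Real.pi * I * t))))

/-- `θ(t)` with `τ` fixed. -/
noncomputable def th (τ t : ℂ) : ℂ := jTheta t τ

/-- `θ'(0)`, the derivative of `θ(·,τ)` at `t = 0`. -/
noncomputable def thd (τ : ℂ) : ℂ := deriv (fun t => jTheta t τ) 0

/-- Membership in the lattice `ℤ + τℤ`. -/
def inLat (τ t : ℂ) : Prop := ∃ m n : ℤ, t = (m : ℂ) + (n : ℂ) * τ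

/-- The function `F₂` arising in Case 2 of the proof of birational invariance:
`F₂(t) = [θ(t+z)θ'(0)/(θ(t)θ(z))]²·[θ(t−z)θ'(0)/(θ(t)θ(−z))]·
[θ(−t+2z)θ(z)/(θ(−t+z)θ(2z))]·[θ(t+(a+1)z)θ(z)/(θ(t+z)θ((a+1)z))]·
[θ(t−(a+1)z)θ(z)/(θ(t−z)θ((a+1)z))]`. -/
noncomputable def F₂ (τ z a t : ℂ) : ℂ :=
  (th τ (t + z) * thd τ / (th τ t * th τ z)) ^ 2 *
  (th τ (t - z) * thd τ / (th τ t * th τ (-z))) *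
  (th τ (-t + 2 * z) * th τ z / (th τ (-t + z) * th τ (2 * z))) *
  (th τ (t + (a + 1) * z) * th τ z / (th τ (t + z) * th τ ((a + 1) * z))) *
  (th τ (t - (a + 1) * z) * th τ z / (th τ (t - z) * th τ ((a + 1) * z)))

/-!
Since `θ` is odd, `θ(−t+z) = −θ(t−z)`, so in `F₂` the zero `θ(t−z)` of the second factor cancels
one of the two poles and `F₂(t) = −R(t)/θ(t−z)` with `R` continuous at `z`. As `θ(0) = 0` and
`θ'(0) ≠ 0`, `(t−z)/θ(t−z) → 1/θ'(0)`, so the residue is `−R(z)/θ'(0)`, which simplifies to the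
stated value using `θ(−z) = −θ(z)` and `θ(−az) = −θ(az)`.

The analytic input is that `θ(·,τ)` is entire, odd, and nonzero off `ℤ + τℤ`, with `θ'(0) ≠ 0`:
writing `θ(t) = c(τ) · sin(πt) · ∏ₙ (1 + q^{n+1}(q^{n+1} − 2cos 2πt))`, the product converges
locally uniformly to a holomorphic function with no zeros off the lattice.
-/

theorem differentiable_tprod_one_add {ι : Type*} {f : ι → ℂ → ℂ}
    (hf : ∀ n, Differentiable ℂ (f n)) (hbound : ∀ K : Set ℂ, IsCompact K →
      ∃ u : ι → ℝ, Summable u ∧ ∀ n, ∀ t ∈ K, ‖f n t‖ ≤ u n) :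
    Differentiable ℂ fun t ↦ ∏' n, (1 + f n t) := by
  have hprod : HasProdLocallyUniformlyOn (fun n t ↦ 1 + f n t) (fun t ↦ ∏' n, (1 + f n t))
      Set.univ := by
    refine hasProdLocallyUniformlyOn_of_forall_compact isOpen_univ fun K _ hK ↦ ?_
    obtain ⟨u, hu, hfu⟩ := hbound K hK
    exact hu.hasProdUniformlyOn_one_add hK (.of_forall hfu)
      fun n ↦ (hf n).continuous.continuousOn
  rw [← differentiableOn_univ]
  exact hprod.differentiableOn (.of_forall fun s ↦ by
    simpa [Finset.prod_fn] using DifferentiableOn.finsetProd fun n _ ↦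
      ((hf n).const_add 1).differentiableOn) isOpen_univ

noncomputable def thetaTerm (q : ℂ) (n : ℕ) (t : ℂ) : ℂ :=
  q ^ (n + 1) * (q ^ (n + 1) - 2 * cos (2 * Real.pi * t))

lemma one_add_thetaTerm (q : ℂ) (n : ℕ) (t : ℂ) :
    1 + thetaTerm q n t =
      (1 - q ^ (n + 1) * cexp (2 * Real.pi * I * t)) *
        (1 - q ^ (n + 1) * cexp (-(2 * Real.pi * I * t))) := by
  have h : cexp (2 * Real.pi * I * t) * cexp (-(2 * Real.pi * I * t)) = 1 := by
    rw [← Complex.exp_add, add_neg_cancel, Complex.exp_zero]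
  rw [thetaTerm, Complex.cos, show 2 * (Real.pi : ℂ) * t * I = 2 * Real.pi * I * t by ring,
    show -(2 * (Real.pi : ℂ) * t) * I = -(2 * Real.pi * I * t) by ring]
  linear_combination -(q ^ (n + 1)) ^ 2 * h

lemma thetaTerm_neg (q : ℂ) (n : ℕ) (t : ℂ) : thetaTerm q n (-t) = thetaTerm q n t := by
  rw [thetaTerm, thetaTerm, mul_neg, Complex.cos_neg]

lemma exists_summable_bound_thetaTerm {q : ℂ} (hq : ‖q‖ < 1) {K : Set ℂ} (hK : IsCompact K) :
    ∃ u : ℕ → ℝ, Summable u ∧ ∀ n, ∀ t ∈ K, ‖thetaTerm q n t‖ ≤ u n := by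
  obtain ⟨M, hM⟩ := hK.exists_bound_of_continuousOn
    (f := fun t : ℂ ↦ cos (2 * Real.pi * t)) (by fun_prop)
  refine ⟨fun n ↦ ‖q‖ ^ (n + 1) * (1 + 2 * M),
    ((summable_nat_add_iff 1).mpr (summable_geometric_of_lt_one (norm_nonneg q) hq)).mul_right _,
    fun n t ht ↦ ?_⟩
  have hqn : ‖q‖ ^ (n + 1) ≤ 1 := pow_le_one₀ (norm_nonneg q) hq.le
  rw [thetaTerm, norm_mul, norm_pow]
  refine mul_le_mul_of_nonneg_left ?_ (by positivity)
  calc ‖q ^ (n + 1) - 2 * cos (2 * Real.pi * t)‖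
      ≤ ‖q ^ (n + 1)‖ + ‖2 * cos (2 * Real.pi * t)‖ := norm_sub_le _ _
    _ ≤ 1 + 2 * M := by
      rw [norm_pow, norm_mul, Complex.norm_two]
      exact add_le_add hqn (mul_le_mul_of_nonneg_left (hM t ht) zero_le_two)

theorem differentiable_tprod_one_add_thetaTerm {q : ℂ} (hq : ‖q‖ < 1) :
    Differentiable ℂ fun t ↦ ∏' n, (1 + thetaTerm q n t) :=
  differentiable_tprod_one_add (fun n ↦ by unfold thetaTerm; fun_prop)
    fun _ hK ↦ exists_summable_bound_thetaTerm hq hK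

lemma norm_jq_lt_one {τ : ℂ} (hτ : 0 < τ.im) : ‖jq τ‖ < 1 :=
  UpperHalfPlane.norm_exp_two_pi_I_lt_one ⟨τ, hτ⟩

lemma one_sub_jq_pow_mul_exp_ne_zero {τ w : ℂ} {n : ℕ}
    (hw : ∀ m : ℤ, w ≠ m - (n + 1) * τ) :
    1 - jq τ ^ (n + 1) * cexp (2 * Real.pi * I * w) ≠ 0 := by
  have h2πI : 2 * (Real.pi : ℂ) * I ≠ 0 := by simp [Real.pi_ne_zero]
  rw [jq, ← Complex.exp_nat_mul, ← Complex.exp_add, sub_ne_zero, ne_comm, Ne,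
    Complex.exp_eq_one_iff]
  rintro ⟨m, hm⟩
  refine hw m (mul_left_cancel₀ h2πI ?_)
  push_cast at hm
  linear_combination hm

/- The hypothesis `ht` excludes the lattice points off the real axis only, so that it also
holds at `t = 0`. -/
lemma one_add_thetaTerm_ne_zero {τ t : ℂ} (ht : ∀ m n : ℤ, n ≠ 0 → t ≠ m + n * τ) (n : ℕ) :
    1 + thetaTerm (jq τ) n t ≠ 0 := by
  rw [one_add_thetaTerm, show -(2 * Real.pi * I * t) = 2 * Real.pi * I * (-t) by ring]
  refine mul_ne_zero (one_sub_jq_pow_mul_exp_ne_zero fun m h ↦ ?_)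
    (one_sub_jq_pow_mul_exp_ne_zero fun m h ↦ ?_)
  · exact ht m (-(n + 1)) (by omega) (by push_cast; linear_combination h)
  · exact ht (-m) (n + 1) (by omega) (by push_cast; linear_combination -h)

lemma tprod_one_add_thetaTerm_ne_zero {τ t : ℂ} (hτ : 0 < τ.im)
    (ht : ∀ m n : ℤ, n ≠ 0 → t ≠ m + n * τ) :
    ∏' n, (1 + thetaTerm (jq τ) n t) ≠ 0 := by
  obtain ⟨u, hu, htu⟩ :=
    exists_summable_bound_thetaTerm (norm_jq_lt_one hτ) (isCompact_singleton (x := t))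
  exact tprod_one_add_ne_zero_of_summable (one_add_thetaTerm_ne_zero ht)
    (hu.of_nonneg_of_le (fun _ ↦ norm_nonneg _) fun n ↦ htu n t rfl)

noncomputable def thetaConst (τ : ℂ) : ℂ :=
  cexp (Real.pi * I * τ / 4) * 2 * ∏' n : ℕ, (1 - jq τ ^ (n + 1))

lemma thetaConst_ne_zero {τ : ℂ} (hτ : 0 < τ.im) : thetaConst τ ≠ 0 := by
  have h := ModularForm.eta_tprod_ne_zero (z := τ) hτ
  simp only [ModularForm.eta_q_eq_pow] at h
  exact mul_ne_zero (mul_ne_zero (Complex.exp_ne_zero _) two_ne_zero) h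

lemma th_eq (τ t : ℂ) :
    th τ t = thetaConst τ * (sin (Real.pi * t) * ∏' n, (1 + thetaTerm (jq τ) n t)) := by
  simp only [th, jTheta, thetaConst, one_add_thetaTerm]
  ring

lemma th_neg (τ t : ℂ) : th τ (-t) = -th τ t := by
  simp only [th_eq, thetaTerm_neg, mul_neg, Complex.sin_neg, neg_mul]

lemma th_zero (τ : ℂ) : th τ 0 = 0 := by
  simp [th_eq]

lemma differentiable_th {τ : ℂ} (hτ : 0 < τ.im) : Differentiable ℂ (th τ) := by
  have := differentiable_tprod_one_add_thetaTerm (norm_jq_lt_one hτ)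
  simp only [funext (th_eq τ)]
  fun_prop

lemma th_ne_zero {τ t : ℂ} (hτ : 0 < τ.im) (ht : ¬ inLat τ t) : th τ t ≠ 0 := by
  have hsin : sin (Real.pi * t) ≠ 0 := by
    rw [Ne, Complex.sin_eq_zero_iff]
    rintro ⟨k, hk⟩
    have hπ : (Real.pi : ℂ) ≠ 0 := by simp [Real.pi_ne_zero]
    exact ht ⟨k, 0, by simpa using mul_left_cancel₀ hπ (hk.trans (mul_comm _ _))⟩
  rw [th_eq]
  exact mul_ne_zero (thetaConst_ne_zero hτ) (mul_ne_zero hsin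
    (tprod_one_add_thetaTerm_ne_zero hτ fun m n _ h ↦ ht ⟨m, n, h⟩))

lemma hasDerivAt_th_zero {τ : ℂ} (hτ : 0 < τ.im) : HasDerivAt (th τ) (thd τ) 0 :=
  (differentiable_th hτ 0).hasDerivAt

lemma thd_ne_zero {τ : ℂ} (hτ : 0 < τ.im) : thd τ ≠ 0 := by
  set P := fun t ↦ ∏' n, (1 + thetaTerm (jq τ) n t)
  have hsin : HasDerivAt (fun t : ℂ ↦ sin (Real.pi * t)) Real.pi 0 := by
    simpa using ((hasDerivAt_id (0 : ℂ)).const_mul (Real.pi : ℂ)).csin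
  have hderiv : HasDerivAt (th τ) (thetaConst τ * (Real.pi * P 0)) 0 := by
    rw [funext (th_eq τ)]
    simpa using (hsin.fun_mul
      (differentiable_tprod_one_add_thetaTerm (norm_jq_lt_one hτ) 0).hasDerivAt).const_mul
        (thetaConst τ)
  rw [thd, show (fun t ↦ jTheta t τ) = th τ from rfl, hderiv.deriv]
  refine mul_ne_zero (thetaConst_ne_zero hτ) (mul_ne_zero (by simp [Real.pi_ne_zero]) ?_)
  refine tprod_one_add_thetaTerm_ne_zero hτ fun m n hn h ↦ ?_
  simpa [hn, hτ.ne'] using congrArg Complex.im h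

lemma tendsto_sub_div_comp_sub {𝕜 : Type*} [NontriviallyNormedField 𝕜] {f : 𝕜 → 𝕜} {f' : 𝕜}
    (hf : HasDerivAt f f' 0) (h0 : f 0 = 0) (hf' : f' ≠ 0) (z : 𝕜) :
    Tendsto (fun t ↦ (t - z) / f (t - z)) (𝓝[≠] z) (𝓝 f'⁻¹) := by
  have hslope :=
    hasDerivAt_iff_tendsto_slope.mp (HasDerivAt.comp_sub_const z z (by rwa [sub_self]))
  refine (hslope.inv₀ hf').congr fun t ↦ ?_
  simp [slope_def_field, h0]

noncomputable def F₂Regular (τ z a t : ℂ) : ℂ :=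
  (th τ (t + z) * thd τ / (th τ t * th τ z)) ^ 2 *
  (thd τ / (th τ t * th τ (-z))) *
  (th τ (-t + 2 * z) * th τ z / th τ (2 * z)) *
  (th τ (t + (a + 1) * z) * th τ z / th τ (t + z) / th τ ((a + 1) * z)) *
  (th τ (t - (a + 1) * z) * th τ z / th τ ((a + 1) * z))

lemma F₂_eq_neg_div (τ z a t : ℂ) : F₂ τ z a t = -F₂Regular τ z a t / th τ (t - z) := by
  rw [F₂, F₂Regular, show -t + z = -(t - z) by ring, th_neg τ (t - z)]
  by_cases h : th τ (t - z) = 0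
  · simp [h]
  · field_simp

lemma continuousAt_F₂Regular {τ z : ℂ} (a : ℂ) (hτ : 0 < τ.im) (hz : ¬ inLat τ z)
    (h2z : ¬ inLat τ (2 * z)) : ContinuousAt (F₂Regular τ z a) z := by
  have hth := (differentiable_th hτ).continuous
  have h1 := th_ne_zero hτ hz
  have h2 : th τ (z + z) ≠ 0 := by rw [← two_mul]; exact th_ne_zero hτ h2z
  have h3 : th τ (-z) ≠ 0 := by rw [th_neg]; exact neg_ne_zero.mpr h1
  unfold F₂Regular
  fun_prop (disch := simp [*])

lemma F₂Regular_self {τ z : ℂ} (a : ℂ) (hτ : 0 < τ.im) (hz : ¬ inLat τ z)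
    (h2z : ¬ inLat τ (2 * z)) :
    F₂Regular τ z a z = th τ ((a + 2) * z) * th τ (a * z) / (th τ ((a + 1) * z)) ^ 2 *
        (thd τ / th τ z) ^ 2 * thd τ := by
  have h1 := th_ne_zero hτ hz
  have h2 := th_ne_zero hτ h2z
  rw [F₂Regular, show z + z = 2 * z by ring, show -z + 2 * z = z by ring,
    show z + (a + 1) * z = (a + 2) * z by ring, show z - (a + 1) * z = -(a * z) by ring,
    th_neg, th_neg]
  field_simp

theorem F₂_residue_at_z_general (τ z a : ℂ) (hτ : 0 < τ.im)
    (hz : ¬ inLat τ z) (h2z : ¬ inLat τ (2 * z)) :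
    Filter.Tendsto (fun t : ℂ => (t - z) * F₂ τ z a t) (𝓝[≠] z)
      (𝓝 (-(th τ ((a + 2) * z) * th τ (a * z) / (th τ ((a + 1) * z)) ^ 2 *
        (thd τ / th τ z) ^ 2))) := by
  have hreg : Tendsto (F₂Regular τ z a) (𝓝[≠] z) (𝓝 (F₂Regular τ z a z)) :=
    (continuousAt_F₂Regular a hτ hz h2z).tendsto.mono_left nhdsWithin_le_nhds
  have hpole := tendsto_sub_div_comp_sub (hasDerivAt_th_zero hτ) (th_zero τ) (thd_ne_zero hτ) z
  have hlim := (hreg.mul hpole).neg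
  rw [F₂Regular_self a hτ hz h2z, mul_inv_cancel_right₀ (thd_ne_zero hτ)] at hlim
  refine hlim.congr fun t ↦ ?_
  rw [F₂_eq_neg_div]
  ring

/-- `F₂` has a simple pole at `t = z` with residue
`lim_{t→z} (t−z)F₂(t) = −θ((a+2)z)θ(az)/θ((a+1)z)²·(θ'(0)/θ(z))²`. -/
theorem F₂_residue_at_z (τ z a : ℂ) (hτ : 0 < τ.im)
    (hz : ¬ inLat τ z) (h2z : ¬ inLat τ (2 * z)) (haz : ¬ inLat τ ((a + 1) * z)) :
    Filter.Tendsto (fun t : ℂ => (t - z) * F₂ τ z a t) (𝓝[≠] z)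
      (𝓝 (-(th τ ((a + 2) * z) * th τ (a * z) / (th τ ((a + 1) * z)) ^ 2 *
        (thd τ / th τ z) ^ 2))) :=
  F₂_residue_at_z_general τ z a hτ hz h2z
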